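/- arXiv:2306.10729 — 3 statements merged into one kernel-verified Lean document; each statement's English description precedes it below -/
import Mathlib

section
/- For every natural number j, the elementary symmetric polynomials e_j in x_0, …, x_{n-1} satisfy ∑_i x_i²·∂_i(e_j) = p_1·e_j − (j+1)·e_{j+1}, where p_1 = ∑_i x_i is the first power sum and e_j = 0 for j > n. -/
open MvPolynomial Finset

private lemma pderiv_prod_X {k : Type*} [CommRing k] {n : ℕ} (i : Fin n)
    (A : Finset (Fin n)) :
    pderiv i (∏ a ∈ A, (X a : MvPolynomial (Fin n) k)) =
      if i ∈ A then ∏ a ∈ A.erase i, (X a : MvPolynomial (Fin n) k) else 0 := by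
  induction A using Finset.induction_on with
  | empty => simp
  | @insert a A ha ih =>
    rw [Finset.prod_insert ha, pderiv_mul, ih]
    by_cases h : i = a
    · subst h
      simp [Finset.erase_insert ha, if_neg ha]
    · rw [pderiv_X_of_ne (Ne.symm h)]
      by_cases hA : i ∈ A
      · rw [if_pos hA, if_pos (Finset.mem_insert_of_mem hA),
          Finset.erase_insert_of_ne (Ne.symm h), Finset.prod_insert (fun hc => ha (Finset.mem_of_mem_erase hc))]
        ring
      · simp [hA, h]

/-- For every `j`, `∑ᵢ xᵢ²·∂ᵢ(e_j) = p₁·e_j - (j+1)·e_{j+1}`, where `p₁ = ∑ᵢ xᵢ`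
and `e_j = 0` for `j > n`. -/
theorem x_sq_pderiv_esymm (k : Type*) [CommRing k] (n : ℕ) (j : ℕ) :
    ∑ i : Fin n, X i ^ 2 * pderiv i (esymm (Fin n) k j) =
      psum (Fin n) k 1 * esymm (Fin n) k j - (j + 1 : ℕ) • esymm (Fin n) k (j + 1) := by
  have hL : ∑ i : Fin n, X i ^ 2 * pderiv i (esymm (Fin n) k j) =
      ∑ A ∈ powersetCard j (univ : Finset (Fin n)), ∑ i ∈ A,
        X i * ∏ a ∈ A, (X a : MvPolynomial (Fin n) k) := by
    rw [esymm]
    simp_rw [map_sum, Finset.mul_sum]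
    rw [Finset.sum_comm]
    refine Finset.sum_congr rfl fun A _ => ?_
    rw [← Finset.sum_filter_add_sum_filter_not univ (· ∈ A)]
    have h2 : ∑ i ∈ Finset.filter (fun i => i ∉ A) univ,
        X i ^ 2 * pderiv i (∏ a ∈ A, (X a : MvPolynomial (Fin n) k)) = 0 := by
      refine Finset.sum_eq_zero fun i hi => ?_
      rw [Finset.mem_filter] at hi
      rw [pderiv_prod_X, if_neg hi.2, mul_zero]
    rw [h2, add_zero]
    rw [Finset.filter_mem_eq_inter, Finset.univ_inter]
    refine Finset.sum_congr rfl fun i hi => ?_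
    rw [pderiv_prod_X, if_pos hi, sq, mul_assoc, Finset.mul_prod_erase _ _ hi]
  rw [hL, psum_one, esymm, esymm]
  -- first RHS term
  have hR : (∑ i : Fin n, (X i : MvPolynomial (Fin n) k)) *
      ∑ A ∈ powersetCard j (univ : Finset (Fin n)), ∏ a ∈ A, (X a : MvPolynomial (Fin n) k) =
      ∑ A ∈ powersetCard j (univ : Finset (Fin n)), ∑ i : Fin n,
        X i * ∏ a ∈ A, (X a : MvPolynomial (Fin n) k) := by
    rw [Finset.sum_mul_sum, Finset.sum_comm]
  rw [hR]
  rw [eq_sub_iff_add_eq]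
  have key : (∑ A ∈ powersetCard j (univ : Finset (Fin n)), ∑ i ∈ A,
        X i * ∏ a ∈ A, (X a : MvPolynomial (Fin n) k)) +
      (j + 1 : ℕ) • ∑ B ∈ powersetCard (j+1) (univ : Finset (Fin n)),
        ∏ a ∈ B, (X a : MvPolynomial (Fin n) k) =
      (∑ A ∈ powersetCard j (univ : Finset (Fin n)), ∑ i ∈ A,
        X i * ∏ a ∈ A, (X a : MvPolynomial (Fin n) k)) +
      ∑ A ∈ powersetCard j (univ : Finset (Fin n)), ∑ i ∈ Aᶜ,
        X i * ∏ a ∈ A, (X a : MvPolynomial (Fin n) k) := by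
    congr 1
    -- (j+1) • ∑_B ∏_B = ∑_A ∑_{i ∉ A} X i ∏_A
    have h1 : ∀ A ∈ powersetCard j (univ : Finset (Fin n)), ∀ i ∈ Aᶜ,
        X i * ∏ a ∈ A, (X a : MvPolynomial (Fin n) k) =
        ∏ a ∈ insert i A, (X a : MvPolynomial (Fin n) k) := by
      intro A _ i hi
      rw [Finset.prod_insert (Finset.mem_compl.mp hi)]
    rw [Finset.sum_congr rfl (fun A hA => Finset.sum_congr rfl (h1 A hA))]
    rw [Finset.smul_sum]
    have h2 : ∀ B ∈ powersetCard (j+1) (univ : Finset (Fin n)),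
        (j + 1 : ℕ) • ∏ a ∈ B, (X a : MvPolynomial (Fin n) k) =
        ∑ _i ∈ B, ∏ a ∈ B, (X a : MvPolynomial (Fin n) k) := by
      intro B hB
      rw [Finset.sum_const, (Finset.mem_powersetCard_univ.mp hB)]
    rw [Finset.sum_congr rfl h2]
    rw [Finset.sum_sigma' (powersetCard (j+1) (univ : Finset (Fin n))) _
      (fun B _ => ∏ a ∈ B, (X a : MvPolynomial (Fin n) k)),
      Finset.sum_sigma' (powersetCard j (univ : Finset (Fin n))) _
      (fun A i => ∏ a ∈ insert i A, (X a : MvPolynomial (Fin n) k))]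
    refine (Finset.sum_nbij' (fun p => ⟨insert p.2 p.1, p.2⟩)
      (fun p => ⟨p.1.erase p.2, p.2⟩) ?_ ?_ ?_ ?_ ?_).symm
    · rintro ⟨A, i⟩ hp
      simp only [Finset.mem_sigma, Finset.mem_powersetCard_univ] at hp ⊢
      refine ⟨?_, Finset.mem_insert_self _ _⟩
      rw [Finset.card_insert_of_notMem (Finset.mem_compl.mp hp.2), hp.1]
    · rintro ⟨B, i⟩ hp
      simp only [Finset.mem_sigma, Finset.mem_powersetCard_univ] at hp ⊢
      refine ⟨?_, Finset.mem_compl.mpr (Finset.notMem_erase _ _)⟩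
      rw [Finset.card_erase_of_mem hp.2, hp.1, Nat.add_sub_cancel]
    · rintro ⟨A, i⟩ hp
      simp only [Finset.mem_sigma, Finset.mem_powersetCard_univ] at hp
      simp [Finset.erase_insert (Finset.mem_compl.mp hp.2)]
    · rintro ⟨B, i⟩ hp
      simp only [Finset.mem_sigma, Finset.mem_powersetCard_univ] at hp
      simp [Finset.insert_erase hp.2]
    · rintro ⟨A, i⟩ _
      rfl
  rw [key, ← Finset.sum_add_distrib]
  refine Finset.sum_congr rfl fun A hA => ?_
  rw [← Finset.sum_add_sum_compl A fun i => X i * ∏ a ∈ A, (X a : MvPolynomial (Fin n) k)]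
end

section
/- For any α, β ∈ k, set s = α·(x_1 + … + x_a) + β·(y_1 + … + y_b), and define the twisted operators E' = E, H' = H − (a·α + b·β)·id, F' = F + (multiplication by s). Then E', H', F' satisfy the sl₂ commutation relations: H'∘E' − E'∘H' = 2·E', H'∘F' − F'∘H' = −2·F', and E'∘F' − F'∘E' = H'. (This is the paper's classification result that a hollow green dot of multiplicity α and a solid green dot of multiplicity β define a twisted sl₂-module structure on a facet of thickness a, with b = N − a.) -/
open MvPolynomial

/-- `E = -(∑ᵢ ∂_{xᵢ} + ∑ⱼ ∂_{yⱼ})` on `k[x₁, …, x_a, y₁, …, y_b]`. -/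
noncomputable def opE (k : Type*) [CommRing k] (a b : ℕ) :
    Module.End k (MvPolynomial (Fin a ⊕ Fin b) k) :=
  - ∑ i : Fin a ⊕ Fin b, (pderiv i).toLinearMap

/-- `H = -2·(∑ᵢ xᵢ·∂_{xᵢ} + ∑ⱼ yⱼ·∂_{yⱼ})` on `k[x₁, …, x_a, y₁, …, y_b]`. -/
noncomputable def opH (k : Type*) [CommRing k] (a b : ℕ) :
    Module.End k (MvPolynomial (Fin a ⊕ Fin b) k) :=
  - (2 • ∑ i : Fin a ⊕ Fin b, (LinearMap.mulLeft k (X i)) ∘ₗ (pderiv i).toLinearMap)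

/-- `F = ∑ᵢ xᵢ²·∂_{xᵢ} + ∑ⱼ yⱼ²·∂_{yⱼ}` on `k[x₁, …, x_a, y₁, …, y_b]`. -/
noncomputable def opF (k : Type*) [CommRing k] (a b : ℕ) :
    Module.End k (MvPolynomial (Fin a ⊕ Fin b) k) :=
  ∑ i : Fin a ⊕ Fin b, (LinearMap.mulLeft k (X i ^ 2)) ∘ₗ (pderiv i).toLinearMap

/-- The degree-one twisting polynomial `s = α·(x₁+…+x_a) + β·(y₁+…+y_b)`. -/
noncomputable def twistPoly (k : Type*) [CommRing k] (a b : ℕ) (α β : k) :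
    MvPolynomial (Fin a ⊕ Fin b) k :=
  α • (∑ i : Fin a, X (Sum.inl i)) + β • (∑ j : Fin b, X (Sum.inr j))

/-!
`E`, `H`, `F` are the derivations `-∑ ∂ᵢ`, `-2 ∑ xᵢ ∂ᵢ`, `∑ xᵢ² ∂ᵢ` of the polynomial ring. The
commutator of two derivations is a derivation, hence determined by its values on the variables,
and evaluating there gives the sl₂ relations for `(H, E, F)`. Twisting by multiplication by `s`
keeps them because `[D, s] = D s` for a derivation `D`: since `s` is linear, `∑ ∂ᵢ s = aα + bβ`
is a constant, so it can be absorbed into `H`, and Euler's identity `∑ xᵢ ∂ᵢ s = s` says that `s`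
has the same `H`-weight as `F`.
-/

attribute [local instance] LieRing.ofAssociativeRing

/-- The relations of `IsSl2Triple h e f`, without its condition `h ≠ 0`. -/
def SatisfiesSl2Relations {L : Type*} [LieRing L] (h e f : L) : Prop :=
  ⁅h, e⁆ = 2 • e ∧ ⁅h, f⁆ = -(2 • f) ∧ ⁅e, f⁆ = h

namespace SatisfiesSl2Relations

variable {L : Type*} [LieRing L] {h e f : L}

theorem map {R L' : Type*} [CommRing R] [LieAlgebra R L] [LieRing L'] [LieAlgebra R L']
    (hef : SatisfiesSl2Relations h e f) (φ : L →ₗ⁅R⁆ L') :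
    SatisfiesSl2Relations (φ h) (φ e) (φ f) := by
  obtain ⟨hhe, hhf, hef⟩ := hef
  refine ⟨?_, ?_, ?_⟩ <;> simp only [← LieHom.map_lie, hhe, hhf, hef, map_neg, map_nsmul]

theorem twist (hef : SatisfiesSl2Relations h e f) {s z : L} (hz : ∀ x : L, ⁅z, x⁆ = 0)
    (hhs : ⁅h, s⁆ = -(2 • s)) (hes : ⁅e, s⁆ = -z) :
    SatisfiesSl2Relations (h - z) e (f + s) := by
  obtain ⟨hhe, hhf, hef⟩ := hef
  refine ⟨?_, ?_, ?_⟩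
  · rw [sub_lie, hz, hhe, sub_zero]
  · rw [sub_lie, lie_add, lie_add, hz, hz, hhf, hhs, smul_add, neg_add, add_zero, sub_zero]
  · rw [lie_add, hef, hes, sub_eq_add_neg]

end SatisfiesSl2Relations

namespace Derivation

variable {R A : Type*} [CommRing R] [CommRing A] [Algebra R A]

@[simps]
def toLinearMapLieHom : Derivation R A A →ₗ⁅R⁆ Module.End R A where
  toFun D := D
  map_add' := coe_add_linearMap
  map_smul' := coe_smul_linearMap
  map_lie' := commutator_coe_linear_map

theorem lie_mulLeft (D : Derivation R A A) (a : A) :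
    ⁅(D : Module.End R A), LinearMap.mulLeft R a⁆ = LinearMap.mulLeft R (D a) := by
  ext b
  simp [Ring.lie_def, D.leibniz, mul_comm]

end Derivation

namespace MvPolynomial

variable {R σ : Type*} [CommRing R]

theorem toLinearMap_mkDerivation [Fintype σ] [DecidableEq σ] (f : σ → MvPolynomial σ R) :
    (mkDerivation R f).toLinearMap =
      ∑ i, LinearMap.mulLeft R (f i) ∘ₗ (pderiv i).toLinearMap := by
  have hsum (p : MvPolynomial σ R) : (∑ i, f i • pderiv i) p = ∑ i, f i * pderiv i p := by
    rw [← Derivation.coeFnAddMonoidHom_apply, map_sum]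
    simp
  have hf : mkDerivation R f = ∑ i, f i • pderiv i := derivation_ext fun j => by
    simp [hsum, pderiv_X, Pi.single_apply]
  exact LinearMap.ext fun p => by simp [hf, hsum]

theorem satisfiesSl2Relations_mkDerivation :
    SatisfiesSl2Relations (-(2 • mkDerivation R (X : σ → MvPolynomial σ R)))
      (-mkDerivation R 1) (mkDerivation R fun i => X i ^ 2) := by
  have hX1 :
      ⁅mkDerivation R X, mkDerivation R (1 : σ → MvPolynomial σ R)⁆ = -mkDerivation R 1 :=
    derivation_ext fun i => by rw [Derivation.commutator_apply]; simp
  have hXX2 : ⁅mkDerivation R (X : σ → MvPolynomial σ R), mkDerivation R fun i => X i ^ 2⁆ =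
      mkDerivation R fun i => X i ^ 2 :=
    derivation_ext fun i => by
      rw [Derivation.commutator_apply]
      simp only [mkDerivation_X, Derivation.leibniz_pow, Nat.add_one_sub_one, pow_one,
        smul_eq_mul, nsmul_eq_mul, Nat.cast_ofNat]
      ring
  have h1X2 : ⁅mkDerivation R (1 : σ → MvPolynomial σ R), mkDerivation R fun i => X i ^ 2⁆ =
      2 • mkDerivation R (X : σ → MvPolynomial σ R) :=
    derivation_ext fun i => by
      rw [Derivation.commutator_apply, Derivation.smul_apply]; simp [Derivation.leibniz_pow]
  refine ⟨?_, ?_, ?_⟩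
  · rw [neg_lie, lie_neg, neg_neg, nsmul_lie, hX1, smul_neg]
  · rw [neg_lie, nsmul_lie, hXX2]
  · rw [neg_lie, h1X2]

end MvPolynomial

section TwistedSl2

variable (k : Type*) [CommRing k] (a b : ℕ)

theorem opE_eq_neg_mkDerivation :
    opE k a b = -(mkDerivation k (1 : Fin a ⊕ Fin b → MvPolynomial _ k)).toLinearMap := by
  simp only [opE, toLinearMap_mkDerivation, Pi.one_apply, LinearMap.mulLeft_one, LinearMap.id_comp]

theorem opH_eq_neg_two_nsmul_mkDerivation :
    opH k a b = -(2 • (mkDerivation k (X : Fin a ⊕ Fin b → MvPolynomial _ k)).toLinearMap) := by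
  rw [opH, toLinearMap_mkDerivation]

theorem opF_eq_mkDerivation :
    opF k a b =
      (mkDerivation k fun i : Fin a ⊕ Fin b => (X i ^ 2 : MvPolynomial _ k)).toLinearMap := by
  rw [opF, toLinearMap_mkDerivation]

theorem satisfiesSl2Relations_opH_opE_opF :
    SatisfiesSl2Relations (opH k a b) (opE k a b) (opF k a b) := by
  have h := (satisfiesSl2Relations_mkDerivation (σ := Fin a ⊕ Fin b)).map
    (Derivation.toLinearMapLieHom (R := k))
  rwa [map_neg, map_neg, map_nsmul, Derivation.toLinearMapLieHom_apply,
    Derivation.toLinearMapLieHom_apply, Derivation.toLinearMapLieHom_apply,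
    ← opE_eq_neg_mkDerivation, ← opH_eq_neg_two_nsmul_mkDerivation,
    ← opF_eq_mkDerivation] at h

variable (α β : k)

theorem mkDerivation_one_twistPoly :
    mkDerivation k 1 (twistPoly k a b α β) =
      ((a : k) * α + (b : k) * β) • (1 : MvPolynomial (Fin a ⊕ Fin b) k) := by
  simp [twistPoly, Algebra.smul_def, mul_comm]

theorem mkDerivation_X_twistPoly :
    mkDerivation k X (twistPoly k a b α β) = twistPoly k a b α β := by
  simp [twistPoly]

theorem lie_opE_mulLeft_twistPoly :
    ⁅opE k a b, LinearMap.mulLeft k (twistPoly k a b α β)⁆ =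
      -(((a : k) * α + (b : k) * β) • 1) := by
  rw [opE_eq_neg_mkDerivation, neg_lie, Derivation.lie_mulLeft, mkDerivation_one_twistPoly]
  exact LinearMap.ext fun p => by simp

theorem lie_opH_mulLeft_twistPoly :
    ⁅opH k a b, LinearMap.mulLeft k (twistPoly k a b α β)⁆ =
      -(2 • LinearMap.mulLeft k (twistPoly k a b α β)) := by
  rw [opH_eq_neg_two_nsmul_mkDerivation, neg_lie, nsmul_lie, Derivation.lie_mulLeft,
    mkDerivation_X_twistPoly]

end TwistedSl2

/-- The green-dot twisted operators `E' = E`, `H' = H - (aα + bβ)·id`,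
`F' = F + (multiplication by s)` satisfy the sl₂ commutation relations. -/
theorem twisted_sl2_relations (k : Type*) [CommRing k] (a b : ℕ) (α β : k) :
    let E' : Module.End k (MvPolynomial (Fin a ⊕ Fin b) k) := opE k a b
    let H' : Module.End k (MvPolynomial (Fin a ⊕ Fin b) k) :=
      opH k a b - ((a : k) * α + (b : k) * β) • 1
    let F' : Module.End k (MvPolynomial (Fin a ⊕ Fin b) k) :=
      opF k a b + LinearMap.mulLeft k (twistPoly k a b α β)
    H' ∘ₗ E' - E' ∘ₗ H' = 2 • E' ∧
    H' ∘ₗ F' - F' ∘ₗ H' = -(2 • F') ∧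
    E' ∘ₗ F' - F' ∘ₗ E' = H' := by
  intro E' H' F'
  have hsl2 := (satisfiesSl2Relations_opH_opE_opF k a b).twist
    (fun x => commute_iff_lie_eq.mp ((Commute.one_left x).smul_left _))
    (lie_opH_mulLeft_twistPoly k a b α β) (lie_opE_mulLeft_twistPoly k a b α β)
  simpa only [SatisfiesSl2Relations, Ring.lie_def, Module.End.mul_eq_comp] using hsl2
end

section
/- The x-torsion submodule T = {m ∈ M : x^j·m = 0 for some j ∈ ℕ} is preserved by all three operators: E(T) ⊆ T, H(T) ⊆ T, and F(T) ⊆ T. (This is the paper's proposition that the torsion part of equivariant Khovanov homology under the basepoint action of ℚ[x] is an sl₂-subrepresentation.) -/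
open Polynomial

section Aux

variable {R : Type*} [CommRing R] {M : Type*} [AddCommGroup M]
  [Module R M] [Module (Polynomial R) M] [IsScalarTower R (Polynomial R) M]

omit [Module R M] [IsScalarTower R (Polynomial R) M] in
lemma xpow_succ_smul (k : ℕ) (m : M) :
    ((X : Polynomial R) ^ (k + 1)) • m = (X : Polynomial R) • (((X : Polynomial R) ^ k) • m) := by
  rw [smul_smul, ← pow_succ']

lemma auxE (E : M →ₗ[R] M)
    (hE : ∀ m : M, E ((X : Polynomial R) • m) = -m + (X : Polynomial R) • E m) :
    ∀ (k : ℕ) (m : M), E (((X : Polynomial R) ^ (k + 1)) • m) =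
      ((X : Polynomial R) ^ (k + 1)) • E m
        - (((k : ℕ) + 1 : Polynomial R)) • (((X : Polynomial R) ^ k) • m) := by
  intro k
  induction k with
  | zero =>
    intro m
    rw [pow_one, hE m]
    push_cast
    module
  | succ k ih =>
    intro m
    rw [xpow_succ_smul (k + 1) m, hE, ih]
    push_cast
    module

lemma auxH (H : M →ₗ[R] M)
    (hH : ∀ m : M, H ((X : Polynomial R) • m) =
      -(2 • ((X : Polynomial R) • m)) + (X : Polynomial R) • H m) :
    ∀ (k : ℕ) (m : M), H (((X : Polynomial R) ^ (k + 1)) • m) =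
      ((X : Polynomial R) ^ (k + 1)) • H m
        - ((2 * ((k : ℕ) + 1) : Polynomial R)) • (((X : Polynomial R) ^ (k + 1)) • m) := by
  intro k
  induction k with
  | zero =>
    intro m
    rw [pow_one, hH m, two_nsmul]
    push_cast
    module
  | succ k ih =>
    intro m
    rw [xpow_succ_smul (k + 1) m, hH, ih, two_nsmul]
    push_cast
    module

lemma auxF (F : M →ₗ[R] M)
    (hF : ∀ m : M, F ((X : Polynomial R) • m) =
      ((X : Polynomial R) ^ 2) • m + (X : Polynomial R) • F m) :
    ∀ (k : ℕ) (m : M), F (((X : Polynomial R) ^ (k + 1)) • m) =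
      ((X : Polynomial R) ^ (k + 1)) • F m
        + (((k : ℕ) + 1 : Polynomial R)) • (((X : Polynomial R) ^ (k + 2)) • m) := by
  intro k
  induction k with
  | zero =>
    intro m
    rw [pow_one, hF m]
    push_cast
    module
  | succ k ih =>
    intro m
    rw [xpow_succ_smul (k + 1) m, hF, ih]
    push_cast
    module

end Aux

/-- The x-torsion submodule of equivariant homology is an sl₂-subrepresentation:
if `x^j • m = 0` for some `j`, the same holds for `E m`, `H m` and `F m`. -/
theorem sl2_preserves_x_torsion
    (R : Type*) [CommRing R] (M : Type*) [AddCommGroup M]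
    [Module R M] [Module (Polynomial R) M] [IsScalarTower R (Polynomial R) M]
    (E H F : M →ₗ[R] M)
    (hE : ∀ m : M, E ((X : Polynomial R) • m) = -m + (X : Polynomial R) • E m)
    (hH : ∀ m : M, H ((X : Polynomial R) • m) =
      -(2 • ((X : Polynomial R) • m)) + (X : Polynomial R) • H m)
    (hF : ∀ m : M, F ((X : Polynomial R) • m) =
      ((X : Polynomial R) ^ 2) • m + (X : Polynomial R) • F m)
    (m : M) (hm : ∃ j : ℕ, ((X : Polynomial R) ^ j) • m = 0) :
    (∃ j : ℕ, ((X : Polynomial R) ^ j) • E m = 0) ∧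
    (∃ j : ℕ, ((X : Polynomial R) ^ j) • H m = 0) ∧
    (∃ j : ℕ, ((X : Polynomial R) ^ j) • F m = 0) := by
  obtain ⟨j, hj⟩ := hm
  have hj1 : ((X : Polynomial R) ^ (j + 1)) • m = 0 := by
    rw [xpow_succ_smul, hj, smul_zero]
  have hj2 : ((X : Polynomial R) ^ (j + 2)) • m = 0 := by
    rw [xpow_succ_smul, hj1, smul_zero]
  refine ⟨⟨j + 2, ?_⟩, ⟨j + 1, ?_⟩, ⟨j + 1, ?_⟩⟩
  · have h2 : ((X : Polynomial R) ^ (j + 1)) • E m = 0 := by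
      have h1 := auxE E hE j m
      rw [hj, hj1, smul_zero, map_zero, eq_comm, sub_eq_zero] at h1
      exact h1
    rw [xpow_succ_smul, h2, smul_zero]
  · have h1 := auxH H hH j m
    rw [hj1, smul_zero, map_zero, eq_comm, sub_eq_zero] at h1
    exact h1
  · have h1 := auxF F hF j m
    rw [hj1, hj2, smul_zero, map_zero, add_zero, eq_comm] at h1
    exact h1
end
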